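/- Let λ₁ ≥ … ≥ λ_m ≥ 0 be a nonincreasing nonnegative sequence with at least one nonzero element, let 𝕀 = {𝕀_1,…,𝕀_m} be a partition of {1,…,p̃}, and let W = diag(w₁,…,w_m) with all w_i > 0. Then the function b ↦ J_λ(W ⟦b⟧_𝕀) is a norm on ℝ^{p̃}: it vanishes exactly at 0, is absolutely homogeneous, and satisfies the triangle inequality. -/

import Mathlib

/-- The nonincreasing rearrangement of the absolute values of the coordinates of `b`. -/
noncomputable def sortedAbs {p : ℕ} (b : Fin p → ℝ) : Fin p → ℝ :=
  fun i => |b (Tuple.sort (fun j => |b j|) (Fin.rev i))|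

/-- The sorted ℓ₁ norm `J_λ(b) = Σ_i λ_i |b|_{(i)}`. -/
noncomputable def Jlam {p : ℕ} (lam b : Fin p → ℝ) : ℝ :=
  ∑ i, lam i * sortedAbs b i

open Finset in
/-- Given a partition of the coordinates `{1,…,p}` into groups (encoded by the map `grp`
sending each coordinate to its group), `groupNorm grp b i = ‖b_{I_i}‖₂` is the Euclidean
norm of the restriction of `b` to the `i`-th group. -/
noncomputable def groupNorm {pt m : ℕ} (grp : Fin pt → Fin m) (b : Fin pt → ℝ)
    (i : Fin m) : ℝ :=
  Real.sqrt (∑ j ∈ univ.filter (fun j => grp j = i), b j ^ 2)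


/-!
Sorting attains the maximum of `∑ λᵢ |c_{σ(i)}|` over all permutations `σ` (rearrangement
inequality, as `λ` is nonincreasing), so `J_λ` is a maximum of functions that are seminorms when
`λ ≥ 0`; this gives homogeneity and the triangle inequality. Since `J_λ` is also monotone in
`|c|`, it can be composed with the groupwise Euclidean norms, which are seminorms themselves.
Definiteness comes from `λ_j |c_i| ≤ J_λ(c)` for any `λ_j > 0`, and from every coordinate lying
in some group.
-/

open Finset

section SortedL1

variable {p : ℕ}

noncomputable def sortPerm (b : Fin p → ℝ) : Equiv.Perm (Fin p) :=
  Fin.revPerm.trans (Tuple.sort fun j => |b j|)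

lemma sortedAbs_eq_abs_sortPerm (b : Fin p → ℝ) (i : Fin p) :
    sortedAbs b i = |b (sortPerm b i)| := rfl

lemma sortedAbs_antitone (b : Fin p → ℝ) : Antitone (sortedAbs b) :=
  fun _ _ hij => Tuple.monotone_sort (fun k => |b k|) (Fin.rev_le_rev.mpr hij)

lemma sortedAbs_sortPerm_symm (b : Fin p → ℝ) (i : Fin p) :
    sortedAbs b ((sortPerm b).symm i) = |b i| := by
  simp [sortedAbs_eq_abs_sortPerm]

variable {lam : Fin p → ℝ}

lemma sum_mul_abs_comp_perm_le_Jlam (hlam : Antitone lam) (c : Fin p → ℝ)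
    (σ : Equiv.Perm (Fin p)) : ∑ i, lam i * |c (σ i)| ≤ Jlam lam c := by
  have key := (hlam.monovary (sortedAbs_antitone c)).sum_mul_comp_perm_le_sum_mul
    (σ := σ.trans (sortPerm c).symm)
  simp only [Equiv.trans_apply, sortedAbs_sortPerm_symm] at key
  exact key

lemma Jlam_smul (hlam : Antitone lam) (s : ℝ) (c : Fin p → ℝ) :
    Jlam lam (s • c) = |s| * Jlam lam c := by
  have hsmul (σ : Equiv.Perm (Fin p)) :
      ∑ i, lam i * |(s • c) (σ i)| = |s| * ∑ i, lam i * |c (σ i)| := by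
    rw [mul_sum]
    refine sum_congr rfl fun i _ => ?_
    rw [Pi.smul_apply, smul_eq_mul, abs_mul]
    ring
  apply le_antisymm
  · calc Jlam lam (s • c) = |s| * ∑ i, lam i * |c (sortPerm (s • c) i)| := hsmul (sortPerm (s • c))
      _ ≤ |s| * Jlam lam c :=
        mul_le_mul_of_nonneg_left (sum_mul_abs_comp_perm_le_Jlam hlam c _) (abs_nonneg s)
  · calc |s| * Jlam lam c = ∑ i, lam i * |(s • c) (sortPerm c i)| := (hsmul (sortPerm c)).symm
      _ ≤ Jlam lam (s • c) := sum_mul_abs_comp_perm_le_Jlam hlam _ _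

variable (hlam : Antitone lam) (hlam_nonneg : ∀ i, 0 ≤ lam i)
include hlam hlam_nonneg

lemma Jlam_add_le (x y : Fin p → ℝ) : Jlam lam (x + y) ≤ Jlam lam x + Jlam lam y := by
  set σ := sortPerm (x + y)
  calc Jlam lam (x + y) = ∑ i, lam i * |x (σ i) + y (σ i)| := rfl
    _ ≤ ∑ i, (lam i * |x (σ i)| + lam i * |y (σ i)|) := sum_le_sum fun i _ => by
        rw [← mul_add]
        exact mul_le_mul_of_nonneg_left (abs_add_le _ _) (hlam_nonneg i)
    _ ≤ Jlam lam x + Jlam lam y := by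
        rw [sum_add_distrib]
        exact add_le_add (sum_mul_abs_comp_perm_le_Jlam hlam x σ)
          (sum_mul_abs_comp_perm_le_Jlam hlam y σ)

lemma Jlam_le_of_abs_le {c d : Fin p → ℝ} (h : ∀ i, |c i| ≤ |d i|) :
    Jlam lam c ≤ Jlam lam d :=
  calc Jlam lam c ≤ ∑ i, lam i * |d (sortPerm c i)| :=
        sum_le_sum fun i _ => mul_le_mul_of_nonneg_left (h _) (hlam_nonneg i)
    _ ≤ Jlam lam d := sum_mul_abs_comp_perm_le_Jlam hlam d _

lemma mul_abs_le_Jlam (c : Fin p → ℝ) (j i : Fin p) : lam j * |c i| ≤ Jlam lam c :=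
  calc lam j * |c i| = lam j * |c (Equiv.swap j i j)| := by rw [Equiv.swap_apply_left]
    _ ≤ ∑ k, lam k * |c (Equiv.swap j i k)| :=
        single_le_sum (f := fun k => lam k * |c (Equiv.swap j i k)|)
          (fun k _ => mul_nonneg (hlam_nonneg k) (abs_nonneg _)) (mem_univ j)
    _ ≤ Jlam lam c := sum_mul_abs_comp_perm_le_Jlam hlam c _

lemma Jlam_eq_zero_iff (hlam_ne : ∃ i, lam i ≠ 0) {c : Fin p → ℝ} :
    Jlam lam c = 0 ↔ c = 0 := by
  obtain ⟨j, hj⟩ := hlam_ne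
  have hpos : 0 < lam j := (hlam_nonneg j).lt_of_ne' hj
  refine ⟨fun h => funext fun i => ?_, ?_⟩
  · have hle := mul_abs_le_Jlam hlam hlam_nonneg c j i
    rw [h] at hle
    exact abs_nonpos_iff.mp (nonpos_of_mul_nonpos_right hle hpos)
  · rintro rfl
    simp [Jlam, sortedAbs]

end SortedL1

section GroupNorm

variable {pt m : ℕ} (grp : Fin pt → Fin m)

noncomputable def groupRestrict (i : Fin m) :
    (Fin pt → ℝ) →ₗ[ℝ] EuclideanSpace ℝ {j // grp j = i} :=
  (WithLp.linearEquiv 2 ℝ _).symm.toLinearMap ∘ₗ LinearMap.funLeft ℝ ℝ Subtype.val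

lemma groupNorm_eq_norm_groupRestrict (b : Fin pt → ℝ) (i : Fin m) :
    groupNorm grp b i = ‖groupRestrict grp i b‖ := by
  rw [groupNorm, EuclideanSpace.norm_eq]
  simp only [groupRestrict, LinearMap.coe_comp, Function.comp_apply, LinearEquiv.coe_coe,
    WithLp.linearEquiv_symm_apply, Real.norm_eq_abs, sq_abs]
  exact congrArg _ (sum_subtype _ (fun j => mem_filter_univ j) _)

lemma groupNorm_nonneg (b : Fin pt → ℝ) (i : Fin m) : 0 ≤ groupNorm grp b i :=
  Real.sqrt_nonneg _

lemma groupNorm_smul (t : ℝ) (b : Fin pt → ℝ) (i : Fin m) :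
    groupNorm grp (t • b) i = |t| * groupNorm grp b i := by
  simp only [groupNorm_eq_norm_groupRestrict, map_smul, norm_smul, Real.norm_eq_abs]

lemma groupNorm_add_le (a b : Fin pt → ℝ) (i : Fin m) :
    groupNorm grp (a + b) i ≤ groupNorm grp a i + groupNorm grp b i := by
  simp only [groupNorm_eq_norm_groupRestrict, map_add]
  exact norm_add_le _ _

lemma forall_groupNorm_eq_zero_iff {b : Fin pt → ℝ} :
    (∀ i, groupNorm grp b i = 0) ↔ b = 0 := by
  simp only [groupNorm_eq_norm_groupRestrict, norm_eq_zero]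
  refine ⟨fun h => funext fun j => ?_, fun h i => by rw [h, map_zero]⟩
  simpa [groupRestrict] using congrArg (fun v => v ⟨j, rfl⟩) (h (grp j))

end GroupNorm

theorem groupSortedL1_is_norm_general {pt m : ℕ} (grp : Fin pt → Fin m)
    (lam : Fin m → ℝ)
    (hlam_anti : ∀ i j : Fin m, i ≤ j → lam j ≤ lam i)
    (hlam_nonneg : ∀ i, 0 ≤ lam i)
    (hlam_ne : ∃ i, lam i ≠ 0)
    (w : Fin m → ℝ) (hw : ∀ i, 0 < w i) :
    (∀ b : Fin pt → ℝ,
        Jlam lam (fun i => w i * groupNorm grp b i) = 0 ↔ b = 0) ∧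
    (∀ (t : ℝ) (b : Fin pt → ℝ),
        Jlam lam (fun i => w i * groupNorm grp (t • b) i) =
          |t| * Jlam lam (fun i => w i * groupNorm grp b i)) ∧
    (∀ a b : Fin pt → ℝ,
        Jlam lam (fun i => w i * groupNorm grp (a + b) i) ≤
          Jlam lam (fun i => w i * groupNorm grp a i) +
            Jlam lam (fun i => w i * groupNorm grp b i)) := by
  have hlam : Antitone lam := hlam_anti
  have hc_nonneg (b : Fin pt → ℝ) (i : Fin m) : 0 ≤ w i * groupNorm grp b i :=
    mul_nonneg (hw i).le (groupNorm_nonneg grp b i)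
  refine ⟨fun b => ?_, fun t b => ?_, fun a b => ?_⟩
  · rw [Jlam_eq_zero_iff hlam hlam_nonneg hlam_ne, ← forall_groupNorm_eq_zero_iff grp, funext_iff]
    simp only [Pi.zero_apply, mul_eq_zero, (hw _).ne', false_or]
  · simp_rw [groupNorm_smul, mul_left_comm (w _) |t|]
    exact (Jlam_smul hlam |t| _).trans (by rw [abs_abs])
  · calc _ ≤ Jlam lam ((fun i => w i * groupNorm grp a i) + fun i => w i * groupNorm grp b i) :=
          Jlam_le_of_abs_le hlam hlam_nonneg fun i => by
            rw [Pi.add_apply, abs_of_nonneg (hc_nonneg _ i),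
              abs_of_nonneg (add_nonneg (hc_nonneg a i) (hc_nonneg b i)), ← mul_add]
            exact mul_le_mul_of_nonneg_left (groupNorm_add_le grp a b i) (hw i).le
      _ ≤ _ := Jlam_add_le hlam hlam_nonneg _ _

/-- The function `b ↦ J_λ(W ⟦b⟧_𝕀)` is a norm on `ℝ^p̃` whenever the groups are nonempty
(`grp` surjective), `λ` is nonincreasing nonnegative with at least one nonzero element, and
the weights `w_i` are positive: it vanishes exactly at `0`, is absolutely homogeneous, and
satisfies the triangle inequality. -/
theorem groupSortedL1_is_norm {pt m : ℕ} (grp : Fin pt → Fin m)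
    (hgrp : Function.Surjective grp)
    (lam : Fin m → ℝ)
    (hlam_anti : ∀ i j : Fin m, i ≤ j → lam j ≤ lam i)
    (hlam_nonneg : ∀ i, 0 ≤ lam i)
    (hlam_ne : ∃ i, lam i ≠ 0)
    (w : Fin m → ℝ) (hw : ∀ i, 0 < w i) :
    (∀ b : Fin pt → ℝ,
        Jlam lam (fun i => w i * groupNorm grp b i) = 0 ↔ b = 0) ∧
    (∀ (t : ℝ) (b : Fin pt → ℝ),
        Jlam lam (fun i => w i * groupNorm grp (t • b) i) =
          |t| * Jlam lam (fun i => w i * groupNorm grp b i)) ∧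
    (∀ a b : Fin pt → ℝ,
        Jlam lam (fun i => w i * groupNorm grp (a + b) i) ≤
          Jlam lam (fun i => w i * groupNorm grp a i) +
            Jlam lam (fun i => w i * groupNorm grp b i)) :=
  groupSortedL1_is_norm_general grp lam hlam_anti hlam_nonneg hlam_ne w hw
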